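/- Let x and s be block vectors of rank r with x, s ∈ int 𝓛, let μ := (1/r) xᵀs, and let η ≥ 0. If d(s, x, μ) ≤ η μ, then (1 + η) · ‖s^{-1}‖₂ ≥ ‖μ^{-1} x‖₂. -/

import Mathlib

set_option synthInstance.maxHeartbeats 1000000
set_option maxHeartbeats 1000000

noncomputable section
open scoped BigOperators

namespace SOCP

/-- `E k` is `ℝ^(k+1)`, written as `(x₀; x̄)` with `x̄ ∈ ℝ^k`. -/
abbrev E (k : ℕ) := EuclideanSpace ℝ (Fin (k + 1))

/-- Build an element of `E k` from a plain function. -/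
def mk {k : ℕ} (f : Fin (k + 1) → ℝ) : E k := (WithLp.equiv 2 _).symm f

/-- The Euclidean norm `‖x̄‖` of the tail of `x`. -/
def tnorm {k : ℕ} (x : E k) : ℝ := Real.sqrt (∑ i : Fin k, (x i.succ) ^ 2)

/-- First Jordan eigenvalue `λ₁(x) = x₀ + ‖x̄‖`. -/
def lam1 {k : ℕ} (x : E k) : ℝ := x 0 + tnorm x

/-- Second Jordan eigenvalue `λ₂(x) = x₀ − ‖x̄‖`. -/
def lam2 {k : ℕ} (x : E k) : ℝ := x 0 - tnorm x

/-- Jordan product `x ∘ y = (xᵀy; x₀ȳ + y₀x̄)`. -/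
def jmul {k : ℕ} (x y : E k) : E k :=
  mk (fun j => if j = 0 then ∑ i, x i * y i else x 0 * y j + y 0 * x j)

/-- The Jordan identity `e = (1; 0)`. -/
def idE {k : ℕ} : E k := mk (fun j => if j = 0 then 1 else 0)

/-- First Jordan frame vector `c₁(x) = ½(1; x̄/‖x̄‖)`. -/
def c1 {k : ℕ} (x : E k) : E k :=
  mk (fun j => if j = 0 then 1 / 2 else x j / (2 * tnorm x))

/-- Second Jordan frame vector `c₂(x) = ½(1; −x̄/‖x̄‖)`. -/
def c2 {k : ℕ} (x : E k) : E k :=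
  mk (fun j => if j = 0 then 1 / 2 else -x j / (2 * tnorm x))

/-- Arrowhead matrix `Arw(x) = [[x₀, x̄ᵀ], [x̄, x₀ I]]`. -/
def Arw {k : ℕ} (x : E k) : Matrix (Fin (k + 1)) (Fin (k + 1)) ℝ :=
  Matrix.of fun i j =>
    if i = 0 then x j else if j = 0 then x i else if i = j then x 0 else 0

/-- Quadratic representation `Q_x = 2 Arw(x)² − Arw(x ∘ x)`. -/
def Qmat {k : ℕ} (x : E k) : Matrix (Fin (k + 1)) (Fin (k + 1)) ℝ :=
  (2 : ℝ) • (Arw x * Arw x) - Arw (jmul x x)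

/-- Jordan square root `x^{1/2} = √λ₁ c₁ + √λ₂ c₂` (equal to `(√x₀; 0)` when `x̄ = 0`). -/
def jsqrt {k : ℕ} (x : E k) : E k :=
  if tnorm x = 0 then mk (fun j => if j = 0 then Real.sqrt (x 0) else 0)
  else Real.sqrt (lam1 x) • c1 x + Real.sqrt (lam2 x) • c2 x

/-- `T_x := Q_{x^{1/2}}`. -/
def Tmat {k : ℕ} (x : E k) : Matrix (Fin (k + 1)) (Fin (k + 1)) ℝ := Qmat (jsqrt x)

/-- Jordan inverse `x⁻¹ = λ₁⁻¹ c₁ + λ₂⁻¹ c₂` (equal to `(x₀⁻¹; 0)` when `x̄ = 0`). -/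
def jinv {k : ℕ} (x : E k) : E k :=
  if tnorm x = 0 then mk (fun j => if j = 0 then (x 0)⁻¹ else 0)
  else (lam1 x)⁻¹ • c1 x + (lam2 x)⁻¹ • c2 x

/-- Matrix-vector product, as a map on `E k`. -/
def mulVecE {k : ℕ} (M : Matrix (Fin (k + 1)) (Fin (k + 1)) ℝ) (v : E k) : E k :=
  mk (M.mulVec (WithLp.equiv 2 _ v))

/-- Block vectors `x = (x₁; …; x_r)` with `x_i ∈ ℝ^{d i + 2}` (so each block has dim ≥ 2). -/
abbrev BV {r : ℕ} (d : Fin r → ℕ) : Type := (i : Fin r) → E (d i + 1)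

variable {r : ℕ} {d : Fin r → ℕ}

/-- Spectral norm `‖x‖₂ = max_i (|x_{i,0}| + ‖x̄_i‖)`. -/
def specNorm (x : BV d) : ℝ := ⨆ i, (|x i 0| + tnorm (x i))

/-- Frobenius norm `‖x‖_F = √(Σ_i (λ₁(x_i)² + λ₂(x_i)²))`. -/
def frobNorm (x : BV d) : ℝ := Real.sqrt (∑ i, (lam1 (x i) ^ 2 + lam2 (x i) ^ 2))

/-- Minimum Jordan eigenvalue `λ_min(x) = min_i λ₂(x_i)`. -/
def lamMin (x : BV d) : ℝ := ⨅ i, lam2 (x i)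

/-- Blockwise Jordan product. -/
def jmulB (x y : BV d) : BV d := fun i => jmul (x i) (y i)

/-- Block identity element. -/
def idB : BV d := fun _ => idE

/-- Membership in the interior of the product of Lorentz cones: `‖x̄_i‖ < x_{i,0}` for all `i`. -/
def inIntLB (x : BV d) : Prop := ∀ i, tnorm (x i) < x i 0

/-- Euclidean inner product of the concatenated vectors. -/
def ip (x y : BV d) : ℝ := ∑ i, ∑ j, x i j * y i j

/-- Block-diagonal application of `T_x`: `(T_x s)_i = T_{x_i} s_i`. -/
def TB (x s : BV d) : BV d := fun i => mulVecE (Tmat (x i)) (s i)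

/-- Distance from the central path `d(x, s, ν) = ‖T_x s − ν e‖_F`. -/
def cdist (x s : BV d) (ν : ℝ) : ℝ := frobNorm (TB x s - ν • (idB : BV d))

/-- Blockwise Jordan inverse. -/
def jinvB (x : BV d) : BV d := fun i => jinv (x i)

/-! Put `μ = xᵀs / r`. Each block of `T_s x − μe` has its eigenvalues bounded by the Frobenius
norm, so `d(s, x, μ) ≤ ημ` gives `λ₁((T_s x)ᵢ) ≤ (1 + η)μ`. On the other hand `T_s = Q_u` with
`u = s^{1/2}`, `λ₂(u)² = λ₂(s)`, and for `u, x` in the Lorentz cone `λ₁(Q_u x) ≥ λ₂(u)² λ₁(x)`,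
because `Q_u x = 2(uᵀx)u − (u₀² − ‖ū‖²)(x₀; −x̄)` and Cauchy–Schwarz. Hence blockwise
`λ₁(xᵢ)/μ ≤ (1 + η)/λ₂(sᵢ) = (1 + η)‖sᵢ⁻¹‖₂`. -/

section LorentzBlock

variable {k : ℕ}

lemma mk_apply (f : Fin (k + 1) → ℝ) (j : Fin (k + 1)) : mk f j = f j := rfl

lemma tnorm_nonneg (x : E k) : 0 ≤ tnorm x := Real.sqrt_nonneg _

lemma sq_tnorm (x : E k) : tnorm x ^ 2 = ∑ j : Fin k, x j.succ ^ 2 :=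
  Real.sq_sqrt (Finset.sum_nonneg fun _ _ => sq_nonneg _)

lemma lam2_le_lam1 (x : E k) : lam2 x ≤ lam1 x := by
  unfold lam1 lam2; linarith [tnorm_nonneg x]

lemma tnorm_eq_abs_mul_of_tail {x y : E k} (c : ℝ) (h : ∀ j : Fin k, y j.succ = c * x j.succ) :
    tnorm y = |c| * tnorm x := by
  simp only [tnorm, h, mul_pow, ← Finset.mul_sum]
  rw [Real.sqrt_mul (sq_nonneg c), Real.sqrt_sq_eq_abs]

lemma tnorm_mk_ite_zero (a : ℝ) :
    tnorm (mk fun j : Fin (k + 1) => if j = 0 then a else 0) = 0 := by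
  simp [tnorm, mk_apply]

lemma abs_sum_tail_mul_le (x y : E k) :
    |∑ j : Fin k, x j.succ * y j.succ| ≤ tnorm x * tnorm y := by
  rw [← Real.sqrt_sq (mul_nonneg (tnorm_nonneg x) (tnorm_nonneg y)), ← Real.sqrt_sq_eq_abs]
  refine Real.sqrt_le_sqrt ?_
  rw [mul_pow, sq_tnorm, sq_tnorm]
  exact Finset.sum_mul_sq_le_sq_mul_sq _ _ _

lemma tnorm_sub_smul_idE (x : E k) (c : ℝ) : tnorm (x - c • idE) = tnorm x := by
  simp [tnorm, idE, mk_apply]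

lemma lam1_sub_smul_idE (x : E k) (c : ℝ) : lam1 (x - c • idE) = lam1 x - c := by
  rw [lam1, lam1, tnorm_sub_smul_idE]
  simp only [idE, PiLp.sub_apply, PiLp.smul_apply, mk_apply, ↓reduceIte, smul_eq_mul]
  ring

lemma tnorm_smul (c : ℝ) (x : E k) : tnorm (c • x) = |c| * tnorm x :=
  tnorm_eq_abs_mul_of_tail c fun _ => rfl

lemma abs_apply_zero_add_tnorm_smul {c : ℝ} (hc : 0 ≤ c) {x : E k} (hx : tnorm x ≤ x 0) :
    |(c • x) 0| + tnorm (c • x) = c * lam1 x := by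
  have hx0 : 0 ≤ x 0 := (tnorm_nonneg x).trans hx
  rw [tnorm_smul, PiLp.smul_apply, smul_eq_mul, abs_of_nonneg (mul_nonneg hc hx0),
    abs_of_nonneg hc, lam1]
  ring

lemma sum_mul_pos_of_interior {x s : E k} (hx : tnorm x < x 0) (hs : tnorm s < s 0) :
    0 < ∑ j, x j * s j := by
  have hcauchy := (abs_le.1 (abs_sum_tail_mul_le x s)).1
  rw [Fin.sum_univ_succ]
  nlinarith [tnorm_nonneg x, tnorm_nonneg s]

lemma smul_c1_add_smul_c2_apply_zero (a b : ℝ) (s : E k) :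
    (a • c1 s + b • c2 s) 0 = (a + b) / 2 := by
  simp only [c1, c2, PiLp.add_apply, PiLp.smul_apply, mk_apply, ↓reduceIte, smul_eq_mul]
  ring

lemma tnorm_smul_c1_add_smul_c2 (a b : ℝ) {s : E k} (hs : tnorm s ≠ 0) :
    tnorm (a • c1 s + b • c2 s) = |a - b| / 2 := by
  rw [tnorm_eq_abs_mul_of_tail ((a - b) / (2 * tnorm s)) fun j => ?_]
  · rw [abs_div, abs_of_nonneg (by linarith [tnorm_nonneg s] : 0 ≤ 2 * tnorm s)]
    field_simp
  · simp only [c1, c2, PiLp.add_apply, PiLp.smul_apply, mk_apply, Fin.succ_ne_zero, ↓reduceIte,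
      smul_eq_mul]
    ring

lemma lam2_jsqrt (s : E k) : lam2 (jsqrt s) = Real.sqrt (lam2 s) := by
  unfold jsqrt
  split_ifs with h
  · simp [lam2, tnorm_mk_ite_zero, mk_apply, h]
  · rw [lam2, tnorm_smul_c1_add_smul_c2 _ _ h, smul_c1_add_smul_c2_apply_zero,
      abs_of_nonneg (sub_nonneg.2 (Real.sqrt_le_sqrt (lam2_le_lam1 s)))]
    ring

lemma tnorm_jsqrt_le (s : E k) : tnorm (jsqrt s) ≤ jsqrt s 0 := by
  have := lam2_jsqrt s
  rw [lam2] at this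
  linarith [Real.sqrt_nonneg (lam2 s)]

lemma abs_jinv_apply_zero_add_tnorm_jinv {s : E k} (hs : 0 < lam2 s) :
    |jinv s 0| + tnorm (jinv s) = (lam2 s)⁻¹ := by
  unfold jinv
  split_ifs with h
  · rw [lam2, h, sub_zero] at hs ⊢
    simp [tnorm_mk_ite_zero, mk_apply, abs_of_pos hs]
  · have hinv : (lam1 s)⁻¹ ≤ (lam2 s)⁻¹ := inv_anti₀ hs (lam2_le_lam1 s)
    have hpos : 0 < (lam1 s)⁻¹ := inv_pos.2 (hs.trans_le (lam2_le_lam1 s))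
    rw [tnorm_smul_c1_add_smul_c2 _ _ h, smul_c1_add_smul_c2_apply_zero,
      abs_of_nonpos (sub_nonpos.2 hinv), abs_of_pos (by linarith)]
    ring

lemma jmul_apply_zero (u v : E k) : jmul u v 0 = ∑ i, u i * v i := rfl

lemma jmul_apply_succ (u v : E k) (j : Fin k) :
    jmul u v j.succ = u 0 * v j.succ + v 0 * u j.succ := by
  simp [jmul, mk_apply]

lemma mulVecE_Arw (u v : E k) : mulVecE (Arw u) v = jmul u v := by
  ext j
  refine Fin.cases ?_ (fun j => ?_) j
  · simp [mulVecE, mk_apply, Arw, Matrix.mulVec, dotProduct, jmul_apply_zero]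
  · simp only [mulVecE, Arw, WithLp.equiv_apply, mk_apply, Matrix.mulVec, dotProduct,
      Matrix.of_apply, Fin.succ_ne_zero, ↓reduceIte, ite_mul, zero_mul, Fin.sum_univ_succ, Fin.succ_inj,
      Finset.sum_ite_eq, Finset.mem_univ, jmul_apply_succ]
    ring

lemma mulVecE_Qmat (u x : E k) :
    mulVecE (Qmat u) x = (2 : ℝ) • jmul u (jmul u x) - jmul (jmul u u) x := by
  rw [← mulVecE_Arw (jmul u u) x, ← mulVecE_Arw u x, ← mulVecE_Arw u (mulVecE _ x)]
  ext j
  simp only [mulVecE, Qmat, WithLp.equiv_apply, mk_apply, Matrix.sub_mulVec, Matrix.smul_mulVec,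
    ← Matrix.mulVec_mulVec, PiLp.sub_apply, PiLp.smul_apply, Pi.sub_apply, Pi.smul_apply]
  rfl

lemma jmul_self_apply_zero (u : E k) : jmul u u 0 = u 0 ^ 2 + tnorm u ^ 2 := by
  rw [jmul_apply_zero, Fin.sum_univ_succ, sq_tnorm]
  simp only [sq]

lemma Qmat_mulVec_apply_zero (u x : E k) :
    mulVecE (Qmat u) x 0 = 2 * u 0 * (∑ i, u i * x i) - (u 0 ^ 2 - tnorm u ^ 2) * x 0 := by
  have sum_u_jmul : ∑ j : Fin k, u j.succ * jmul u x j.succ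
      = u 0 * ∑ j : Fin k, u j.succ * x j.succ + x 0 * tnorm u ^ 2 := by
    simp only [jmul_apply_succ, sq_tnorm, Finset.mul_sum, ← Finset.sum_add_distrib]
    exact Finset.sum_congr rfl fun _ _ => by ring
  have sum_jmul_x :
      ∑ j : Fin k, jmul u u j.succ * x j.succ = 2 * u 0 * ∑ j : Fin k, u j.succ * x j.succ := by
    simp only [jmul_apply_succ, Finset.mul_sum]
    exact Finset.sum_congr rfl fun _ _ => by ring
  rw [mulVecE_Qmat]
  simp only [PiLp.sub_apply, PiLp.smul_apply, smul_eq_mul, jmul_apply_zero (jmul u u) x,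
    jmul_apply_zero u (jmul u x)]
  rw [Fin.sum_univ_succ, Fin.sum_univ_succ (fun i => jmul u u i * x i), sum_u_jmul, sum_jmul_x,
    jmul_self_apply_zero, jmul_apply_zero, Fin.sum_univ_succ]
  ring

lemma Qmat_mulVec_apply_succ (u x : E k) (j : Fin k) :
    mulVecE (Qmat u) x j.succ =
      2 * (∑ i, u i * x i) * u j.succ + (u 0 ^ 2 - tnorm u ^ 2) * x j.succ := by
  rw [mulVecE_Qmat]
  simp only [PiLp.sub_apply, PiLp.smul_apply, smul_eq_mul, jmul_apply_succ, jmul_self_apply_zero,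
    jmul_apply_zero u x]
  ring

lemma sum_tail_mul_Qmat_mulVec (u x : E k) :
    ∑ j : Fin k, x j.succ * mulVecE (Qmat u) x j.succ =
      2 * (∑ i, u i * x i) * (∑ j : Fin k, u j.succ * x j.succ) +
        (u 0 ^ 2 - tnorm u ^ 2) * tnorm x ^ 2 := by
  simp only [Qmat_mulVec_apply_succ, sq_tnorm x, Finset.mul_sum, ← Finset.sum_add_distrib]
  exact Finset.sum_congr rfl fun _ _ => by ring

lemma lam2_sq_mul_lam1_le_lam1_Qmat_mulVec {u x : E k} (hu : tnorm u ≤ u 0)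
    (hx : tnorm x ≤ x 0) :
    lam2 u ^ 2 * lam1 x ≤ lam1 (mulVecE (Qmat u) x) := by
  set w := mulVecE (Qmat u) x
  set a := u 0
  set h := tnorm u
  set m := tnorm x
  set t := ∑ j : Fin k, u j.succ * x j.succ
  have hp : ∑ i, u i * x i = a * x 0 + t := Fin.sum_univ_succ _
  have hw0 : w 0 = 2 * a * (a * x 0 + t) - (a ^ 2 - h ^ 2) * x 0 := by
    rw [Qmat_mulVec_apply_zero, hp]
  have hcauchy : 2 * (a * x 0 + t) * t + (a ^ 2 - h ^ 2) * m ^ 2 ≤ m * tnorm w := by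
    rw [← hp, ← sum_tail_mul_Qmat_mulVec]
    exact (le_abs_self _).trans (abs_sum_tail_mul_le x w)
  have ht := abs_le.1 (abs_sum_tail_mul_le u x)
  have hh := tnorm_nonneg u
  have hm := tnorm_nonneg x
  have hw := tnorm_nonneg w
  simp only [lam1, lam2]
  rw [hw0]
  rcases hm.eq_or_lt with hm0 | hm0
  · have ht0 : t = 0 := by rw [← hm0, mul_zero] at ht; linarith [ht.1, ht.2]
    rw [← hm0, ht0]
    nlinarith [mul_nonneg (mul_nonneg (hh.trans hu) hh) (hm.trans hx)]
  · refine le_of_mul_le_mul_right ?_ hm0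
    have hA : 0 ≤ t + h * m := by linarith [ht.1]
    have hB : 0 ≤ a * (x 0 + m) + t - h * m := by
      nlinarith [mul_le_mul hu hx hm (hh.trans hu), mul_le_mul_of_nonneg_right hu hm]
    -- multiplied by `m`, the right side exceeds the left by `2(t + hm)(a(x₀ + m) + t − hm)`
    -- plus the Cauchy–Schwarz slack
    nlinarith [mul_nonneg hA hB]

lemma lam2_mul_lam1_le_lam1_Tmat_mulVec {s x : E k} (hs : tnorm s ≤ s 0)
    (hx : tnorm x ≤ x 0) :
    lam2 s * lam1 x ≤ lam1 (mulVecE (Tmat s) x) := by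
  have hs' : 0 ≤ lam2 s := sub_nonneg.2 hs
  have := lam2_sq_mul_lam1_le_lam1_Qmat_mulVec (tnorm_jsqrt_le s) hx
  rwa [lam2_jsqrt, Real.sq_sqrt hs'] at this

end LorentzBlock

lemma le_specNorm (x : BV d) (i : Fin r) : |x i 0| + tnorm (x i) ≤ specNorm x :=
  le_ciSup (f := fun i => |x i 0| + tnorm (x i)) (Set.finite_range _).bddAbove i

lemma lam1_le_frobNorm (y : BV d) (i : Fin r) : lam1 (y i) ≤ frobNorm y := by
  refine (le_abs_self _).trans ?_
  rw [← Real.sqrt_sq_eq_abs, frobNorm]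
  refine Real.sqrt_le_sqrt ((le_add_of_nonneg_right (sq_nonneg (lam2 (y i)))).trans ?_)
  exact Finset.single_le_sum (f := fun j => lam1 (y j) ^ 2 + lam2 (y j) ^ 2)
    (fun _ _ => by positivity) (Finset.mem_univ i)

lemma lam1_TB_sub_le_cdist (s x : BV d) (ν : ℝ) (i : Fin r) :
    lam1 (TB s x i) - ν ≤ cdist s x ν := by
  rw [← lam1_sub_smul_idE]
  exact lam1_le_frobNorm (TB s x - ν • (idB : BV d)) i

lemma ip_pos {x s : BV d} (hr : 0 < r) (hx : inIntLB x) (hs : inIntLB s) : 0 < ip x s :=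
  Finset.sum_pos (fun i _ => sum_mul_pos_of_interior (hx i) (hs i))
    ⟨⟨0, hr⟩, Finset.mem_univ _⟩

/-- If `μ = (1/r) xᵀs` and `d(s, x, μ) ≤ ημ`, then
`(1 + η)·‖s⁻¹‖₂ ≥ ‖μ⁻¹ x‖₂`. -/
theorem specNorm_bound_near_central_path {r : ℕ} {d : Fin r → ℕ} (hr : 0 < r)
    (x s : BV d) (hx : inIntLB x) (hs : inIntLB s) (η : ℝ) (hη : 0 ≤ η)
    (hd : cdist s x (ip x s / r) ≤ η * (ip x s / r)) :
    specNorm ((ip x s / r)⁻¹ • x) ≤ (1 + η) * specNorm (jinvB s) := by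
  set μ := ip x s / r
  have hμ : 0 < μ := div_pos (ip_pos hr hx hs) (Nat.cast_pos.2 hr)
  have : Nonempty (Fin r) := ⟨⟨0, hr⟩⟩
  refine ciSup_le fun i => ?_
  have hs2 : 0 < lam2 (s i) := sub_pos.2 (hs i)
  have hblock : lam2 (s i) * lam1 (x i) ≤ (1 + η) * μ :=
    (lam2_mul_lam1_le_lam1_Tmat_mulVec (hs i).le (hx i).le).trans
      (show lam1 (TB s x i) ≤ _ by linarith [lam1_TB_sub_le_cdist s x μ i])
  calc |(μ⁻¹ • x) i 0| + tnorm ((μ⁻¹ • x) i) = lam1 (x i) / μ := by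
        rw [Pi.smul_apply, abs_apply_zero_add_tnorm_smul (inv_nonneg.2 hμ.le) (hx i).le,
          inv_mul_eq_div]
    _ ≤ (1 + η) / lam2 (s i) := by
        rw [div_le_div_iff₀ hμ hs2]
        linarith
    _ = (1 + η) * (|jinvB s i 0| + tnorm (jinvB s i)) := by
        rw [jinvB, abs_jinv_apply_zero_add_tnorm_jinv hs2, div_eq_mul_inv]
    _ ≤ (1 + η) * specNorm (jinvB s) := mul_le_mul_of_nonneg_left (le_specNorm _ i) (by linarith)

end SOCP
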